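/- Let G ⊆ K⟨𝒜⟩ be a set of polynomials, each with leading coefficient 1 and of degree > 1, such that for every g ∈ G no leading monomial T(g′) with g′ ∈ G ∖ {g} is a submonomial of T(g), and let t > 2 be an integer. Then the following are equivalent: (1) for every S-quadruplet (f, R; g, L) of G with |f| + |R| ≤ t, there exist finitely many scalars λ_i ∈ K, monomials L_i, R_i, and elements g_i ∈ G with f·R = Σ_i λ_i·L_i·g_i·R_i such that, for each i, T(L_i·g_i·R_i) ⪯ T(f)·R, and T(L_i·g_i·R_i) ≺ T(f)·R whenever L_i is the empty monomial; (2) the same conclusion holds for every clear S-quadruplet (f, R; g, L) of G with |f| + |R| ≤ t. -/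

import Mathlib

open scoped BigOperators

/-! ### Generic definitions over an arbitrary alphabet -/

section Generic

variable {α : Type*} {K : Type*} [Field K]

/-- The monomial (word) `w`, viewed as an element of the free associative algebra
`K⟨α⟩ = MonoidAlgebra K (FreeMonoid α)`. -/
noncomputable def Mw (w : List α) : MonoidAlgebra K (FreeMonoid α) :=
  MonoidAlgebra.single (FreeMonoid.ofList w) 1

/-- Strict deglex order on words, induced by a strict order `r` on the letters. -/
def WLt (r : α → α → Prop) (u v : List α) : Prop :=
  u.length < v.length ∨ (u.length = v.length ∧ List.Lex r u v)

/-- Reflexive deglex order on words. -/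
def WLe (r : α → α → Prop) (u v : List α) : Prop :=
  WLt r u v ∨ u = v

/-- `w` is the deglex-leading monomial of `f`. -/
def IsLM (r : α → α → Prop) (f : MonoidAlgebra K (FreeMonoid α)) (w : List α) : Prop :=
  FreeMonoid.ofList w ∈ f.coeff.support ∧
    ∀ u ∈ f.coeff.support, u ≠ FreeMonoid.ofList w → WLt r (FreeMonoid.toList u) w

/-- `p` is a submonomial of `w`. -/
def Submono (p w : List α) : Prop := ∃ l r, w = l ++ p ++ r

/-- `f` is reduced to zero by the set `G`: `f = Σ λ_t · A_t · g_t · B_t` with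
`T(A_t · g_t · B_t) ⪯ T(f)` for every `t` (and `f = 0` qualifies vacuously). -/
def Red0 (r : α → α → Prop) (G : Set (MonoidAlgebra K (FreeMonoid α)))
    (f : MonoidAlgebra K (FreeMonoid α)) : Prop :=
  f = 0 ∨
    ∃ (N : ℕ) (lam : Fin N → K) (A B : Fin N → List α)
      (g : Fin N → MonoidAlgebra K (FreeMonoid α)) (w : List α),
      (∀ t, g t ∈ G) ∧
      f = ∑ t, lam t • (Mw (A t) * g t * Mw (B t)) ∧
      IsLM r f w ∧
      ∀ t u, IsLM r (Mw (A t) * g t * Mw (B t)) u → WLe r u w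

/-- `(f, R; g, L)` is an S-quadruplet of `G`:  `f, g ∈ G`, `0 < |L| < |f|`,
`0 < |R| < |g|`, and `T(f)·R = L·T(g)`. -/
def IsSQuad (r : α → α → Prop) (G : Set (MonoidAlgebra K (FreeMonoid α)))
    (f : MonoidAlgebra K (FreeMonoid α)) (R : List α)
    (g : MonoidAlgebra K (FreeMonoid α)) (L : List α) : Prop :=
  f ∈ G ∧ g ∈ G ∧
    ∃ tf tg, IsLM r f tf ∧ IsLM r g tg ∧
      0 < L.length ∧ L.length < tf.length ∧
      0 < R.length ∧ R.length < tg.length ∧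
      tf ++ R = L ++ tg

/-- A clear S-quadruplet: the leader `T(f)·R`, with its first and last letters deleted,
has no leading monomial of an element of `G` as a submonomial. -/
def IsClearSQuad (r : α → α → Prop) (G : Set (MonoidAlgebra K (FreeMonoid α)))
    (f : MonoidAlgebra K (FreeMonoid α)) (R : List α)
    (g : MonoidAlgebra K (FreeMonoid α)) (L : List α) : Prop :=
  IsSQuad r G f R g L ∧
    ∀ tf, IsLM r f tf → ∀ g' ∈ G, ∀ tg', IsLM r g' tg' →
      ¬ Submono tg' (((tf ++ R).drop 1).dropLast)

end Generic

/-! ### The quaternionic alphabet -/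

/-- The alphabet `𝒜`: quaternionic letters `q l`, conjugate letters `qbar l` (`l < n`),
and the basis letters `i, j, k`. -/
inductive Letter (n : ℕ) where
  | q (l : Fin n)
  | qbar (l : Fin n)
  | i
  | j
  | k
deriving DecidableEq

namespace Letter

/-- Rank realizing the conjugate-alternating order
`q 0 ≺ qbar 0 ≺ q 1 ≺ qbar 1 ≺ ⋯ ≺ i ≺ j ≺ k`. -/
def rank {n : ℕ} : Letter n → ℕ
  | q l => 2 * l.val
  | qbar l => 2 * l.val + 1
  | i => 2 * n
  | j => 2 * n + 1
  | k => 2 * n + 2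

/-- The conjugate letter: `q l ↔ qbar l`; basis letters are fixed. -/
def conj {n : ℕ} : Letter n → Letter n
  | q l => qbar l
  | qbar l => q l
  | i => i
  | j => j
  | k => k

/-- Whether a letter is one of the basis letters `i, j, k` (the set `ℰ`). -/
def isE {n : ℕ} : Letter n → Bool
  | i => true
  | j => true
  | k => true
  | _ => false

end Letter

/-- The conjugate-alternating strict order on letters. -/
def llt {n : ℕ} (a b : Letter n) : Prop := a.rank < b.rank

/-- The conjugate-alternating order on letters (reflexive version). -/
def lle {n : ℕ} (a b : Letter n) : Prop := a.rank ≤ b.rank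

/-- The free associative algebra `K⟨𝒜⟩`. -/
abbrev FA (n : ℕ) (K : Type*) [Field K] := MonoidAlgebra K (FreeMonoid (Letter n))

/-- The bracket of a monomial: `[w] = w + w̄`, where conjugation is the anti-automorphism
sending `q l ↦ qbar l`, `qbar l ↦ q l` and `e ↦ -e` for basis letters `e`. -/
noncomputable def br {n : ℕ} {K : Type*} [Field K] (w : List (Letter n)) : FA n K :=
  Mw w + ((-1 : K) ^ (w.filter (fun a => a.isE)).length : K) • Mw ((w.map Letter.conj).reverse)

/-! ### The defining ideal ℐ -/

/-- The generators of the defining ideal `ℐ`: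
(1) the multiplication table of `i, j, k`;
(2) the conjugate-defining relations `2q̄ + q + iqi + jqj + kqk`;
(3) commutativity of the coordinate brackets `[q]`, `[iq]`, `[jq]`, `[kq]`
with every letter. -/
def Igens (n : ℕ) (K : Type*) [Field K] : Set (FA n K) :=
  {p | p = Mw [Letter.i, Letter.i] + 1 ∨ p = Mw [Letter.j, Letter.j] + 1 ∨
       p = Mw [Letter.k, Letter.k] + 1 ∨
       p = Mw [Letter.i, Letter.j] - Mw [Letter.k] ∨
       p = Mw [Letter.j, Letter.i] + Mw [Letter.k] ∨
       p = Mw [Letter.i, Letter.k] + Mw [Letter.j] ∨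
       p = Mw [Letter.k, Letter.i] - Mw [Letter.j] ∨
       p = Mw [Letter.k, Letter.j] + Mw [Letter.i] ∨
       p = Mw [Letter.j, Letter.k] - Mw [Letter.i]} ∪
  {p | ∃ l : Fin n,
       p = (2 : K) • Mw [Letter.qbar l] + Mw [Letter.q l]
           + Mw [Letter.i, Letter.q l, Letter.i]
           + Mw [Letter.j, Letter.q l, Letter.j]
           + Mw [Letter.k, Letter.q l, Letter.k]} ∪
  {p | ∃ (a : Letter n) (l : Fin n),
       p = Mw [a] * br [Letter.q l] - br [Letter.q l] * Mw [a] ∨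
       p = Mw [a] * br [Letter.i, Letter.q l] - br [Letter.i, Letter.q l] * Mw [a] ∨
       p = Mw [a] * br [Letter.j, Letter.q l] - br [Letter.j, Letter.q l] * Mw [a] ∨
       p = Mw [a] * br [Letter.k, Letter.q l] - br [Letter.k, Letter.q l] * Mw [a]}

/-- The defining ideal `ℐ` of the quaternionic polynomial algebra. -/
noncomputable def Iideal (n : ℕ) (K : Type*) [Field K] : TwoSidedIdeal (FA n K) :=
  TwoSidedIdeal.span (Igens n K)

/-! ### The conjectured Gröbner basis BG (parametrized by a letter substitution σ) -/

/-- The monomial `w`, with the substitution `σ` applied letterwise. -/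
noncomputable def Mσ {n : ℕ} {K : Type*} [Field K] (σ : Letter n → Letter n) (w : List (Letter n)) :
    FA n K := Mw (w.map σ)

/-- The bracket `[w]`, with the substitution `σ` applied letterwise before bracketing. -/
noncomputable def Brσ {n : ℕ} {K : Type*} [Field K] (σ : Letter n → Letter n) (w : List (Letter n)) :
    FA n K := br (w.map σ)

/-- The family `BGm` (`m ≥ 5`), with substitution `σ` applied:
`3·[2·A·y·1] − [2·A·y·1]·3` where `A` is a nonempty non-decreasing word over `𝒬 ∪ 𝒬̄` with
`3 ⪯ A`, every letter of `A` is `≺ y`, and `y ∈ 𝒬 ∪ ℰ`. -/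
def BGmSet (n : ℕ) (K : Type*) [Field K] (σ : Letter n → Letter n) : Set (FA n K) :=
  {p | ∃ (a b c : Fin n) (A : List (Letter n)) (y : Letter n),
        a < b ∧ b < c ∧ A ≠ [] ∧
        (∀ x ∈ A, ∃ l : Fin n, x = Letter.q l ∨ x = Letter.qbar l) ∧
        List.Chain' lle (Letter.q c :: A) ∧
        ((∃ l : Fin n, y = Letter.q l) ∨ y.isE) ∧
        (∀ x ∈ A, llt x y) ∧
        p = Mσ σ [Letter.q c] * Brσ σ ([Letter.q b] ++ A ++ [y, Letter.q a])
            - Brσ σ ([Letter.q b] ++ A ++ [y, Letter.q a]) * Mσ σ [Letter.q c]}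

/-- The set `BG` (with letter substitution `σ`; `BG` itself is `BGset n K id`).
Here `a ≺ b ≺ c ≺ d` in `Fin n` play the roles of the letters `1 ≺ 2 ≺ 3 ≺ 4` of `𝒬`,
and `e, e'` are basis letters. -/
def BGset (n : ℕ) (K : Type*) [Field K] (σ : Letter n → Letter n) : Set (FA n K) :=
  -- BG2(a)
  {p | p = Mσ σ [Letter.i, Letter.i] + 1 ∨ p = Mσ σ [Letter.j, Letter.j] + 1 ∨
       p = Mσ σ [Letter.k, Letter.k] + 1 ∨
       p = Mσ σ [Letter.i, Letter.j] - Mσ σ [Letter.k] ∨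
       p = Mσ σ [Letter.j, Letter.i] + Mσ σ [Letter.k] ∨
       p = Mσ σ [Letter.j, Letter.k] - Mσ σ [Letter.i] ∨
       p = Mσ σ [Letter.k, Letter.j] + Mσ σ [Letter.i] ∨
       p = Mσ σ [Letter.k, Letter.i] - Mσ σ [Letter.j] ∨
       p = Mσ σ [Letter.i, Letter.k] + Mσ σ [Letter.j]} ∪
  -- BG2(b)
  {p | ∃ a : Fin n,
       p = Mσ σ [Letter.qbar a, Letter.q a] - Mσ σ [Letter.q a, Letter.qbar a]} ∪
  {p | ∃ a b : Fin n, a < b ∧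
       (p = Brσ σ [Letter.q b] * Mσ σ [Letter.qbar a]
            - Mσ σ [Letter.qbar a] * Brσ σ [Letter.q b] ∨
        p = Brσ σ [Letter.q b] * Mσ σ [Letter.q a]
            - Mσ σ [Letter.q a] * Brσ σ [Letter.q b])} ∪
  -- BG2(c)
  {p | ∃ a b : Fin n, a < b ∧
       p = Mσ σ [Letter.q b] * Brσ σ [Letter.q a] - Brσ σ [Letter.q a] * Mσ σ [Letter.q b]} ∪
  {p | ∃ (a : Fin n) (e : Letter n), e.isE ∧
       p = Mσ σ [e] * Brσ σ [Letter.q a] - Brσ σ [Letter.q a] * Mσ σ [e]} ∪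
  -- BG3(a)
  {p | ∃ a : Fin n,
       p = Mσ σ [Letter.k, Letter.q a, Letter.k] + Mσ σ [Letter.j, Letter.q a, Letter.j]
           + Mσ σ [Letter.i, Letter.q a, Letter.i]
           + (2 : K) • Mσ σ [Letter.qbar a] + Mσ σ [Letter.q a]} ∪
  -- BG3(b)
  {p | ∃ a b c : Fin n, a < b ∧ b < c ∧
       (p = Brσ σ [Letter.q c, Letter.q b] * Mσ σ [Letter.q a]
            - Mσ σ [Letter.q a] * Brσ σ [Letter.q c, Letter.q b] ∨
        p = Brσ σ [Letter.q c, Letter.q a] * Mσ σ [Letter.qbar b]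
            - Mσ σ [Letter.qbar b] * Brσ σ [Letter.q c, Letter.q a] ∨
        p = Brσ σ [Letter.q c, Letter.q a] * Mσ σ [Letter.q b]
            - Mσ σ [Letter.q b] * Brσ σ [Letter.q c, Letter.q a])} ∪
  {p | ∃ a b : Fin n, a < b ∧
       (p = Brσ σ [Letter.q b, Letter.q a] * Mσ σ [Letter.qbar a]
            - Mσ σ [Letter.qbar a] * Brσ σ [Letter.q b, Letter.q a] ∨
        p = Brσ σ [Letter.q b, Letter.q a] * Mσ σ [Letter.q a]
            - Mσ σ [Letter.q a] * Brσ σ [Letter.q b, Letter.q a])} ∪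
  {p | ∃ (a b : Fin n) (e : Letter n), a < b ∧ e.isE ∧
       (p = Brσ σ [e, Letter.q b] * Mσ σ [Letter.q a]
            - Mσ σ [Letter.q a] * Brσ σ [e, Letter.q b] ∨
        p = Brσ σ [e, Letter.q a] * Mσ σ [Letter.q b]
            - Mσ σ [Letter.q b] * Brσ σ [e, Letter.q a] ∨
        p = Brσ σ [e, Letter.q a] * Mσ σ [Letter.qbar b]
            - Mσ σ [Letter.qbar b] * Brσ σ [e, Letter.q a])} ∪
  {p | ∃ (a : Fin n) (e : Letter n), e.isE ∧
       (p = Brσ σ [e, Letter.q a] * Mσ σ [Letter.q a]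
            - Mσ σ [Letter.q a] * Brσ σ [e, Letter.q a] ∨
        p = Brσ σ [e, Letter.q a] * Mσ σ [Letter.qbar a]
            - Mσ σ [Letter.qbar a] * Brσ σ [e, Letter.q a])} ∪
  {p | ∃ a : Fin n,
       (p = Brσ σ [Letter.j, Letter.q a] * Mσ σ [Letter.i]
            - Mσ σ [Letter.i] * Brσ σ [Letter.j, Letter.q a] ∨
        p = Brσ σ [Letter.k, Letter.q a] * Mσ σ [Letter.i]
            - Mσ σ [Letter.i] * Brσ σ [Letter.k, Letter.q a] ∨
        p = Brσ σ [Letter.k, Letter.q a] * Mσ σ [Letter.j]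
            - Mσ σ [Letter.j] * Brσ σ [Letter.k, Letter.q a])} ∪
  -- BG3(c)
  {p | ∃ a b : Fin n, a < b ∧
       p = Mσ σ [Letter.q b] * Brσ σ [Letter.q b, Letter.q a]
           - Brσ σ [Letter.q b, Letter.q a] * Mσ σ [Letter.q b]} ∪
  -- BG4
  {p | ∃ a b c : Fin n, a < b ∧ b < c ∧
       p = Mσ σ [Letter.q c] * Brσ σ [Letter.q b, Letter.q c, Letter.q a]
           - Brσ σ [Letter.q b, Letter.q c, Letter.q a] * Mσ σ [Letter.q c]} ∪
  {p | ∃ a b c d : Fin n, a < b ∧ b < c ∧ c < d ∧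
       p = Mσ σ [Letter.q c] * Brσ σ [Letter.q b, Letter.q d, Letter.q a]
           - Brσ σ [Letter.q b, Letter.q d, Letter.q a] * Mσ σ [Letter.q c]} ∪
  {p | ∃ (a b c : Fin n) (e : Letter n), a < b ∧ b < c ∧ e.isE ∧
       p = Mσ σ [Letter.q c] * Brσ σ [Letter.q b, e, Letter.q a]
           - Brσ σ [Letter.q b, e, Letter.q a] * Mσ σ [Letter.q c]} ∪
  {p | ∃ (a b : Fin n) (e e' : Letter n), a < b ∧ e.isE ∧ e'.isE ∧ lle e' e ∧
       ¬(e' = Letter.k ∧ e = Letter.k) ∧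
       p = Mσ σ [e'] * Brσ σ [Letter.q b, e, Letter.q a]
           - Brσ σ [Letter.q b, e, Letter.q a] * Mσ σ [e']} ∪
  -- BGm, m ≥ 5
  BGmSet n K σ

/-- The conjectured Gröbner basis `BG`. -/
def BG (n : ℕ) (K : Type*) [Field K] : Set (FA n K) := BGset n K id

/-- The normal-form shape of Theorem "Normal form": `M` is a submonomial of a word
`A_1 p_1 f_1 ⋯ A_r p_r f_r A_{r+1} e_1 f_{r+1} ⋯ e_s f_{r+s} e_{s+1}` satisfying
conditions (i)–(v).  (Indices are 0-based: `A 0, …, A r`; `p 0, …, p (r-1)`;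
`f 0, …, f (r+s-1)`; `e 0, …, e s`.) -/
def NormalShape (n : ℕ) (M : List (Letter n)) : Prop :=
  ∃ (r s : ℕ) (A : ℕ → List (Letter n)) (p f e : ℕ → Letter n),
    (∀ t < r, ∃ l : Fin n, p t = Letter.q l) ∧
    (∀ t < r + s, ∃ l : Fin n, f t = Letter.q l) ∧
    (∀ t < s + 1, (e t).isE) ∧
    (∀ t1 < s + 1, ∀ t2 < s + 1, e t1 = Letter.k → e t2 = Letter.k → t1 = t2) ∧
    (∀ t < r + 1,
      (∀ x ∈ A t, ∃ l : Fin n, x = Letter.q l ∨ x = Letter.qbar l) ∧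
      List.Chain' lle (A t)) ∧
    List.Chain' lle ((List.range r).map p ++ (List.range (s + 1)).map e) ∧
    List.Chain' lle ((List.range (r + s)).map f) ∧
    List.Chain' lle
      ((List.range r).flatMap (fun t => A t ++ [p t]) ++ A r ++ (List.range (s + 1)).map e) ∧
    (∀ t < r, llt (f t) (p t) ∧ ∀ x ∈ A t, llt x (p t)) ∧
    Submono M
      ((List.range r).flatMap (fun t => A t ++ [p t, f t]) ++ A r
        ++ (List.range s).flatMap (fun t => [e t, f (r + t)]) ++ [e s])

/-- A conjugation substitution: for each `l`, either both `q l` and `qbar l` are fixed or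
both are swapped; the basis letters are fixed. -/
def IsConjSub {n : ℕ} (σ : Letter n → Letter n) : Prop :=
  (∀ l : Fin n,
    (σ (Letter.q l) = Letter.q l ∧ σ (Letter.qbar l) = Letter.qbar l) ∨
    (σ (Letter.q l) = Letter.qbar l ∧ σ (Letter.qbar l) = Letter.q l)) ∧
  σ Letter.i = Letter.i ∧ σ Letter.j = Letter.j ∧ σ Letter.k = Letter.k

/-- The decomposition property for `f·R` from Proposition "k-decomp equiv":
`f·R = Σ_i λ_i·L_i·g_i·R_i` with `T(L_i·g_i·R_i) ⪯ T(f)·R` for every `i`, and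
`T(L_i·g_i·R_i) ≺ T(f)·R` whenever `L_i` is the empty monomial. -/
def SDecomp {α : Type*} {K : Type*} [Field K] (r : α → α → Prop)
    (G : Set (MonoidAlgebra K (FreeMonoid α)))
    (f : MonoidAlgebra K (FreeMonoid α)) (R : List α) : Prop :=
  ∃ (N : ℕ) (lam : Fin N → K) (Li Ri : Fin N → List α)
    (gi : Fin N → MonoidAlgebra K (FreeMonoid α)),
    (∀ i, gi i ∈ G) ∧
    f * Mw R = ∑ i, lam i • (Mw (Li i) * gi i * Mw (Ri i)) ∧
    ∀ tf, IsLM r f tf →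
      (∀ i u, IsLM r (Mw (Li i) * gi i * Mw (Ri i)) u → WLe r u (tf ++ R)) ∧
      (∀ i, Li i = [] →
        ∀ u, IsLM r (Mw (Li i) * gi i * Mw (Ri i)) u → WLt r u (tf ++ R))

/-- `G` is a Gröbner basis (w.r.t. the deglex order induced by `r`) of the two-sided
ideal `J`: `G ⊆ J`, `G` generates `J`, and the leading monomial of every nonzero element
of `J` has the leading monomial of some element of `G` as a submonomial. -/
def IsGroebnerBasis {α : Type*} {K : Type*} [Field K] (r : α → α → Prop)
    (G : Set (MonoidAlgebra K (FreeMonoid α)))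
    (J : TwoSidedIdeal (MonoidAlgebra K (FreeMonoid α))) : Prop :=
  (∀ g ∈ G, g ∈ J) ∧
  TwoSidedIdeal.span G = J ∧
  ∀ h, h ∈ J → h ≠ 0 →
    ∃ th, IsLM r h th ∧ ∃ g ∈ G, ∃ tg, IsLM r g tg ∧ Submono tg th

section Aux17

variable {α : Type*} [LinearOrder α] {K : Type*} [Field K]

private lemma lex_append_same : ∀ {u v : List α}, List.Lex (· < ·) u v →
    u.length = v.length → ∀ Q : List α, List.Lex (· < ·) (u ++ Q) (v ++ Q)
  | _, _, List.Lex.nil, h, _ => by simp at h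
  | _, _, List.Lex.cons hl, h, Q =>
      List.Lex.cons (lex_append_same hl (by simpa using h) Q)
  | _, _, List.Lex.rel hab, _, _ => List.Lex.rel hab

private lemma wlt_trans {u v w : List α} (h1 : WLt (· < ·) u v) (h2 : WLt (· < ·) v w) :
    WLt (· < ·) u w := by
  rcases h1 with h1 | ⟨e1, l1⟩ <;> rcases h2 with h2 | ⟨e2, l2⟩
  · exact Or.inl (h1.trans h2)
  · exact Or.inl (e2 ▸ h1)
  · exact Or.inl (e1 ▸ h2)
  · exact Or.inr ⟨e1.trans e2, List.lex_trans (fun h1 h2 => lt_trans h1 h2) l1 l2⟩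

private lemma wlt_irrefl (u : List α) : ¬ WLt (· < ·) u u := by
  rintro (h | ⟨-, h⟩)
  · exact lt_irrefl _ h
  · exact List.lt_irrefl u h

private lemma wlt_total {u v : List α} (h : u ≠ v) :
    WLt (· < ·) u v ∨ WLt (· < ·) v u := by
  rcases lt_trichotomy u.length v.length with hl | hl | hl
  · exact Or.inl (Or.inl hl)
  · rcases lt_trichotomy u v with hx | hx | hx
    · exact Or.inl (Or.inr ⟨hl, hx⟩)
    · exact absurd hx h
    · exact Or.inr (Or.inr ⟨hl.symm, hx⟩)
  · exact Or.inr (Or.inl hl)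

private lemma wlt_append {u v : List α} (h : WLt (· < ·) u v) (Q : List α) :
    WLt (· < ·) (u ++ Q) (v ++ Q) := by
  rcases h with h | ⟨e, l⟩
  · exact Or.inl (by simp only [List.length_append]; omega)
  · exact Or.inr ⟨by simp [e], lex_append_same l e Q⟩

private lemma wle_append {u v : List α} (h : WLe (· < ·) u v) (Q : List α) :
    WLe (· < ·) (u ++ Q) (v ++ Q) := by
  rcases h with h | rfl
  · exact Or.inl (wlt_append h Q)
  · exact Or.inr rfl

private lemma isLM_unique {f : MonoidAlgebra K (FreeMonoid α)} {u v : List α}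
    (hu : IsLM (· < ·) f u) (hv : IsLM (· < ·) f v) : u = v := by
  by_contra hne
  have h1 : WLt (· < ·) v u := by
    have hne' : FreeMonoid.ofList v ≠ FreeMonoid.ofList u := by
      intro h
      exact hne (congrArg FreeMonoid.toList h).symm
    simpa using hu.2 (FreeMonoid.ofList v) hv.1 hne'
  have h2 : WLt (· < ·) u v := by
    have hne' : FreeMonoid.ofList u ≠ FreeMonoid.ofList v := by
      intro h
      exact hne (congrArg FreeMonoid.toList h)
    simpa using hv.2 (FreeMonoid.ofList u) hu.1 hne'
  exact wlt_irrefl u (wlt_trans h2 h1)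

private lemma exists_isLM {f : MonoidAlgebra K (FreeMonoid α)} (hf : f ≠ 0) :
    ∃ u, IsLM (· < ·) f u := by
  have hs : f.coeff.support.Nonempty :=
    Finsupp.support_nonempty_iff.mpr (mt MonoidAlgebra.coeff_eq_zero.mp hf)
  obtain ⟨w, hw, hmax⟩ := f.coeff.support.exists_max_image
      (fun x => toLex ((FreeMonoid.toList x).length, FreeMonoid.toList x)) hs
  refine ⟨FreeMonoid.toList w, by simpa using hw, ?_⟩
  intro x hx hne
  have hnex : FreeMonoid.toList x ≠ FreeMonoid.toList w := by
    intro h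
    apply hne
    have := congrArg FreeMonoid.ofList h
    simpa using this
  rcases wlt_total hnex with h | h
  · exact h
  · exfalso
    have hle := hmax x hx
    have hlt : toLex ((FreeMonoid.toList w).length, FreeMonoid.toList w)
        < toLex ((FreeMonoid.toList x).length, FreeMonoid.toList x) := by
      rw [Prod.Lex.lt_iff]
      rcases h with h | ⟨e, l⟩
      · exact Or.inl h
      · exact Or.inr ⟨e, l⟩
    exact absurd hle (not_le_of_gt hlt)

private lemma Mw_mul (u v : List α) :
    (Mw u : MonoidAlgebra K (FreeMonoid α)) * Mw v = Mw (u ++ v) := by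
  simp [Mw, MonoidAlgebra.single_mul_single, FreeMonoid.ofList_append]

private lemma isLM_mul_Mw {f : MonoidAlgebra K (FreeMonoid α)} {u : List α}
    (h : IsLM (· < ·) f u) (Q : List α) : IsLM (· < ·) (f * Mw Q) (u ++ Q) := by
  have hsupp : (f * (Mw Q : MonoidAlgebra K (FreeMonoid α))).coeff.support
      = f.coeff.support.map (mulRightEmbedding (FreeMonoid.ofList Q)) :=
    MonoidAlgebra.support_coeff_mul_single f (1 : K) (by simp) (FreeMonoid.ofList Q)
  constructor
  · rw [hsupp, Finset.mem_map]
    exact ⟨FreeMonoid.ofList u, h.1, by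
      simp [mulRightEmbedding_apply, FreeMonoid.ofList_append]⟩
  · intro x hx hne
    rw [hsupp, Finset.mem_map] at hx
    obtain ⟨y, hy, rfl⟩ := hx
    have hyu : y ≠ FreeMonoid.ofList u := by
      intro hy2
      apply hne
      rw [hy2]
      simp [mulRightEmbedding_apply, FreeMonoid.ofList_append]
    have hw := h.2 y hy hyu
    have ht : FreeMonoid.toList (mulRightEmbedding (FreeMonoid.ofList Q) y)
        = FreeMonoid.toList y ++ Q := by
      simp [mulRightEmbedding_apply, FreeMonoid.toList_mul]
    rw [ht]
    exact wlt_append hw Q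

end Aux17

/-- For a set `G` of monic polynomials of degree `> 1` with pairwise
irreducible leading monomials and an integer `t > 2`: the decomposition property holds for
all S-quadruplets of size `≤ t` iff it holds for all clear S-quadruplets of size `≤ t`. -/
theorem sdecomp_iff_clear_sdecomp
    (α : Type*) [Fintype α] [LinearOrder α] (K : Type*) [Field K]
    (G : Set (MonoidAlgebra K (FreeMonoid α)))
    (hmonic : ∀ g ∈ G, ∃ tg, IsLM (· < ·) g tg ∧ g.coeff (FreeMonoid.ofList tg) = 1)
    (hdeg : ∀ g ∈ G, ∀ tg, IsLM (· < ·) g tg → 1 < tg.length)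
    (hirr : ∀ g ∈ G, ∀ g' ∈ G, g' ≠ g → ∀ tg tg',
      IsLM (· < ·) g tg → IsLM (· < ·) g' tg' → ¬ Submono tg' tg)
    (t : ℕ) (ht : 2 < t) :
    (∀ (f : MonoidAlgebra K (FreeMonoid α)) (R : List α)
        (g : MonoidAlgebra K (FreeMonoid α)) (L : List α),
      IsSQuad (· < ·) G f R g L →
      (∃ tf, IsLM (· < ·) f tf ∧ tf.length + R.length ≤ t) →
      SDecomp (· < ·) G f R) ↔
    (∀ (f : MonoidAlgebra K (FreeMonoid α)) (R : List α)
        (g : MonoidAlgebra K (FreeMonoid α)) (L : List α),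
      IsClearSQuad (· < ·) G f R g L →
      (∃ tf, IsLM (· < ·) f tf ∧ tf.length + R.length ≤ t) →
      SDecomp (· < ·) G f R) := by
  constructor
  · intro h f R g L hq hb
    exact h f R g L hq.1 hb
  · intro hclear
    suffices main : ∀ (n : ℕ) (R : List α), R.length ≤ n →
        ∀ (f g : MonoidAlgebra K (FreeMonoid α)) (L : List α),
          IsSQuad (· < ·) G f R g L →
          (∃ tf, IsLM (· < ·) f tf ∧ tf.length + R.length ≤ t) →
          SDecomp (· < ·) G f R by
      intro f R g L hq hb
      exact main R.length R le_rfl f g L hq hb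
    intro n
    induction n with
    | zero =>
      intro R hR f g L hq _
      obtain ⟨-, -, tf, tg, -, -, -, -, hR0, -, -⟩ := hq
      omega
    | succ n ih =>
      intro R hR f g L hq hb
      by_cases hcl : ∀ tf, IsLM (· < ·) f tf → ∀ g' ∈ G, ∀ tg', IsLM (· < ·) g' tg' →
          ¬ Submono tg' (((tf ++ R).drop 1).dropLast)
      · exact hclear f R g L ⟨hq, hcl⟩ hb
      push_neg at hcl
      obtain ⟨hfG, hgG, tf, tg, htf, htg, hL0, hLtf, hR0, hRtg, heq⟩ := hq
      obtain ⟨tf1, htf1, g', hg'G, tg', htg', hsub⟩ := hcl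
      rw [isLM_unique htf1 htf] at hsub
      obtain ⟨tfb, htfb, hbd⟩ := hb
      rw [isLM_unique htfb htf] at hbd
      -- basic length facts
      have hWlen : (tf ++ R).length = tf.length + R.length := by
        simp
      have hWne : (tf ++ R) ≠ [] := by
        apply List.ne_nil_of_length_pos
        omega
      have hdne : (tf ++ R).drop 1 ≠ [] := by
        apply List.ne_nil_of_length_pos
        rw [List.length_drop]
        omega
      -- surgery: tf ++ R = P ++ tg' ++ Q with P, Q nonempty
      obtain ⟨P0, Q0, hPQ⟩ := hsub
      have hW1 : tf ++ R = (tf ++ R).head hWne :: (tf ++ R).drop 1 := by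
        rw [List.drop_one]
        exact (List.cons_head_tail hWne).symm
      have hW2 : (tf ++ R).drop 1
          = (P0 ++ tg' ++ Q0) ++ [((tf ++ R).drop 1).getLast hdne] := by
        conv_lhs => rw [← List.dropLast_append_getLast hdne]
        rw [hPQ]
      set x0 := (tf ++ R).head hWne with hx0
      set x1 := ((tf ++ R).drop 1).getLast hdne with hx1
      set P : List α := x0 :: P0 with hPdef
      set Q : List α := Q0 ++ [x1] with hQdef
      have hWPQ : tf ++ R = P ++ tg' ++ Q := by
        rw [hW1, hW2, hPdef, hQdef]
        simp
      have hPlen : 0 < P.length := by simp [hPdef]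
      have hQlen : 0 < Q.length := by simp [hQdef]
      have hlen : tf.length + R.length = P.length + tg'.length + Q.length := by
        have h := congrArg List.length hWPQ
        simp only [List.length_append] at h
        omega
      -- Claim A : tf.length < P.length + tg'.length
      have hA : tf.length < P.length + tg'.length := by
        by_contra hA
        push_neg at hA
        have hsubtf : Submono tg' tf := by
          refine ⟨P, Q.take (tf.length - P.length - tg'.length), ?_⟩
          have h1 : tf = (tf ++ R).take tf.length := (List.take_left (l₁ := tf) (l₂ := R)).symm
          have h2 : (tf ++ R).take tf.length
              = P ++ tg' ++ Q.take (tf.length - P.length - tg'.length) := by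
            rw [hWPQ, List.take_append,
              List.take_of_length_le (by simp only [List.length_append]; omega)]
            congr 2
            simp only [List.length_append]
            omega
          exact h1.trans h2
        by_cases hgf : g' = f
        · subst hgf
          have he : tg' = tf := isLM_unique htg' htf
          have hl := congrArg List.length he
          omega
        · exact hirr f hfG g' hg'G hgf tf tg' htf htg' hsubtf
      -- Claim B : P.length < tf.length
      have hB : P.length < tf.length := by
        by_contra hB
        push_neg at hB
        have hLP : L.length < P.length := lt_of_lt_of_le hLtf hB
        have hsubtg : Submono tg' tg := by
          refine ⟨P.drop L.length, Q, ?_⟩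
          have h1 : tg = (tf ++ R).drop L.length := by
            rw [heq]
            exact (List.drop_left (l₁ := L) (l₂ := tg)).symm
          have h2 : (tf ++ R).drop L.length = P.drop L.length ++ tg' ++ Q := by
            rw [hWPQ, List.drop_append, List.drop_append,
              Nat.sub_eq_zero_of_le (le_of_lt hLP),
              Nat.sub_eq_zero_of_le (by simp only [List.length_append]; omega)]
            simp
          exact h1.trans h2
        by_cases hgg : g' = g
        · subst hgg
          have he : tg' = tg := isLM_unique htg' htg
          have hl := congrArg List.length he
          have hLW := congrArg List.length heq
          simp only [List.length_append] at hLW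
          omega
        · exact hirr g hgG g' hg'G hgg tg tg' htg htg' hsubtg
      -- the smaller S-quadruplet (f, R1; g', P)
      set m := P.length + tg'.length - tf.length with hmdef
      have hm0 : 0 < m := by omega
      have hmR : m < R.length := by omega
      have hmtg' : m < tg'.length := by omega
      set R1 := R.take m with hR1def
      set Q' := R.drop m with hQ'def
      have hRQ : R = R1 ++ Q' := (List.take_append_drop m R).symm
      have hR1len : R1.length = m := by
        rw [hR1def, List.length_take]
        omega
      have hkey : tf ++ R1 = P ++ tg' := by
        have h1 : (tf ++ R).take (tf.length + m) = tf ++ R1 := by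
          rw [List.take_append,
            List.take_of_length_le (by omega)]
          congr 2
          omega
        have h2 : (tf ++ R).take (tf.length + m) = P ++ tg' := by
          rw [hWPQ]
          have hn : tf.length + m = (P ++ tg').length := by
            simp only [List.length_append]
            omega
          rw [hn, List.take_left]
        exact h1.symm.trans h2
      have hq1 : IsSQuad (· < ·) G f R1 g' P :=
        ⟨hfG, hg'G, tf, tg', htf, htg', hPlen, hB, by omega, by omega, hkey⟩
      have hdec := ih R1 (by omega) f g' P hq1 ⟨tf, htf, by omega⟩
      obtain ⟨N, lam, Li, Ri, gi, hgiG, hsum, hlm⟩ := hdec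
      refine ⟨N, lam, Li, fun i => Ri i ++ Q', gi, hgiG, ?_, ?_⟩
      · calc f * Mw R = f * (Mw R1 * Mw Q') := by rw [Mw_mul, ← hRQ]
          _ = (f * Mw R1) * Mw Q' := by rw [mul_assoc]
          _ = (∑ i, lam i • (Mw (Li i) * gi i * Mw (Ri i))) * Mw Q' := by rw [hsum]
          _ = ∑ i, lam i • (Mw (Li i) * gi i * Mw (Ri i ++ Q')) := by
              rw [Finset.sum_mul]
              refine Finset.sum_congr rfl fun i _ => ?_
              rw [smul_mul_assoc, mul_assoc, Mw_mul]
      · intro tf2 htf2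
        have htf2e : tf2 = tf := isLM_unique htf2 htf
        subst htf2e
        have hmain := hlm tf2 htf
        have hcomm : ∀ i : Fin N, Mw (Li i) * gi i * Mw (Ri i ++ Q')
            = (Mw (Li i) * gi i * Mw (Ri i)) * Mw Q' := fun i => by
          rw [mul_assoc (Mw (Li i) * gi i), Mw_mul]
        have htfR : tf2 ++ R = (tf2 ++ R1) ++ Q' := by
          rw [List.append_assoc, ← hRQ]
        constructor
        · intro i u hu
          rw [hcomm i] at hu
          have hne : (Mw (Li i) * gi i * Mw (Ri i) : MonoidAlgebra K (FreeMonoid α)) ≠ 0 := by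
            intro h0
            rw [h0, zero_mul] at hu
            simpa using hu.1
          obtain ⟨u0, hu0⟩ := exists_isLM hne
          have hueq : u = u0 ++ Q' := isLM_unique hu (isLM_mul_Mw hu0 Q')
          rw [hueq, htfR]
          exact wle_append (hmain.1 i u0 hu0) Q'
        · intro i hLi u hu
          rw [hcomm i] at hu
          have hne : (Mw (Li i) * gi i * Mw (Ri i) : MonoidAlgebra K (FreeMonoid α)) ≠ 0 := by
            intro h0
            rw [h0, zero_mul] at hu
            simpa using hu.1
          obtain ⟨u0, hu0⟩ := exists_isLM hne
          have hueq : u = u0 ++ Q' := isLM_unique hu (isLM_mul_Mw hu0 Q')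
          rw [hueq, htfR]
          exact wlt_append (hmain.2 i hLi u0 hu0) Q'
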